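/- Let Fo > 0, Ste > 0, θ_l, θ_r ∈ ℝ, λ₀ > 0 with erf(λ₀) ≠ 0 and erfc(λ₀) ≠ 0, λ(t) = 2λ₀√(t·Fo), θ_left(t, x) = θ_l·(1 − erf(x/(2√(t·Fo)))/erf(λ₀)), θ_right(t, x) = θ_r·(1 − erfc(x/(2√(t·Fo)))/erfc(λ₀)). Then the Stefan condition ∂_x θ_right(t, λ(t)) − ∂_x θ_left(t, λ(t)) = λ'(t)/(Fo·Ste) holds for every t > 0 if and only if λ₀ satisfies the scalar equation λ₀ − (Ste/√π)·e^{−λ₀²}·(θ_r/erfc(λ₀) + θ_l/erf(λ₀)) = 0. -/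

import Mathlib

/-- The error function `erf x = (2/√π) ∫₀ˣ e^{−s²} ds`. -/
noncomputable def erf (x : ℝ) : ℝ :=
  (2 / Real.sqrt Real.pi) * ∫ s in (0:ℝ)..x, Real.exp (-s ^ 2)

/-- The complementary error function `erfc = 1 - erf`. -/
noncomputable def erfc (x : ℝ) : ℝ := 1 - erf x

/-- Liquid-phase branch of the exact self-similar Stefan solution. -/
noncomputable def thetaLeft (Fo θl lam0 t x : ℝ) : ℝ :=
  θl * (1 - erf (x / (2 * Real.sqrt (t * Fo))) / erf lam0)

/-- Solid-phase branch of the exact self-similar Stefan solution. -/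
noncomputable def thetaRight (Fo θr lam0 t x : ℝ) : ℝ :=
  θr * (1 - erfc (x / (2 * Real.sqrt (t * Fo))) / erfc lam0)

/-- The liquid–solid interface `λ(t) = 2lam0√(t·Fo)`. -/
noncomputable def interface (Fo lam0 t : ℝ) : ℝ := 2 * lam0 * Real.sqrt (t * Fo)

/-- The exact self-similar solution of the two-phase Stefan problem. -/
noncomputable def thetaEx (Fo θl θr lam0 t x : ℝ) : ℝ :=
  if x ≤ interface Fo lam0 t then thetaLeft Fo θl lam0 t x else thetaRight Fo θr lam0 t x


/-!
On the interface the similarity variable `x / (2√(t·Fo))` equals `λ₀`, so both one-sided heat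
fluxes there, and the interface speed `λ'(t)`, are constant multiples of `1/√(t·Fo)`. The flux jump
minus `λ'(t)/(Fo·Ste)` is therefore the scalar residual times the nonzero factor `-1/(Ste√(t·Fo))`,
and the Stefan condition holds at one time exactly when it holds at all times.
-/

open Real

theorem hasDerivAt_erf (x : ℝ) : HasDerivAt erf (2 / √π * exp (-x ^ 2)) x := by
  have hc : Continuous fun s : ℝ => exp (-s ^ 2) := by fun_prop
  exact (intervalIntegral.integral_hasDerivAt_right (hc.intervalIntegrable _ _)
    (hc.stronglyMeasurableAtFilter _ _) hc.continuousAt).const_mul _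

theorem hasDerivAt_erf_div (c x : ℝ) :
    HasDerivAt (fun y => erf (y / c)) (2 / √π * exp (-(x / c) ^ 2) / c) x := by
  have := (hasDerivAt_erf (x / c)).comp x ((hasDerivAt_id' x).div_const c)
  exact this.congr_deriv (by ring)

theorem hasDerivAt_thetaLeft (Fo θl lam0 t x : ℝ) :
    HasDerivAt (thetaLeft Fo θl lam0 t)
      (-θl * (2 / √π * exp (-(x / (2 * √(t * Fo))) ^ 2) / (2 * √(t * Fo))) / erf lam0) x :=
  ((((hasDerivAt_erf_div (2 * √(t * Fo)) x).div_const (erf lam0)).const_sub 1).const_mul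
    θl).congr_deriv (by ring)

theorem hasDerivAt_thetaRight (Fo θr lam0 t x : ℝ) :
    HasDerivAt (thetaRight Fo θr lam0 t)
      (θr * (2 / √π * exp (-(x / (2 * √(t * Fo))) ^ 2) / (2 * √(t * Fo))) / erfc lam0) x :=
  (((((hasDerivAt_erf_div (2 * √(t * Fo)) x).const_sub 1).div_const (erfc lam0)).const_sub
    1).const_mul θr).congr_deriv (by ring)

theorem hasDerivAt_interface (Fo lam0 t : ℝ) (h : t * Fo ≠ 0) :
    HasDerivAt (interface Fo lam0) (lam0 * Fo / √(t * Fo)) t :=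
  ((((hasDerivAt_id t).mul_const Fo).sqrt (by simpa using h)).const_mul (2 * lam0)).congr_deriv
    (by simp only [id]; field_simp)

theorem interface_div_two_sqrt (Fo lam0 t : ℝ) (h : 0 < t * Fo) :
    interface Fo lam0 t / (2 * √(t * Fo)) = lam0 := by
  have := (Real.sqrt_pos.2 h).ne'
  rw [interface]; field_simp

theorem stefan_jump_sub_interface_speed (Fo Ste θl θr lam0 t : ℝ) (hFo : 0 < Fo) (ht : 0 < t)
    (hSte : Ste ≠ 0) :
    deriv (thetaRight Fo θr lam0 t) (interface Fo lam0 t) -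
        deriv (thetaLeft Fo θl lam0 t) (interface Fo lam0 t) -
        deriv (interface Fo lam0) t / (Fo * Ste) =
      -(lam0 - Ste / √π * exp (-lam0 ^ 2) * (θr / erfc lam0 + θl / erf lam0)) /
        (Ste * √(t * Fo)) := by
  have htFo : 0 < t * Fo := mul_pos ht hFo
  rw [(hasDerivAt_thetaRight ..).deriv, (hasDerivAt_thetaLeft ..).deriv,
    (hasDerivAt_interface Fo lam0 t htFo.ne').deriv, interface_div_two_sqrt Fo lam0 t htFo]
  have := (Real.sqrt_pos.2 htFo).ne'
  have := hFo.ne'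
  field_simp
  ring

theorem stefan_condition_at_iff (Fo Ste θl θr lam0 t : ℝ) (hFo : 0 < Fo) (ht : 0 < t)
    (hSte : Ste ≠ 0) :
    deriv (thetaRight Fo θr lam0 t) (interface Fo lam0 t) -
        deriv (thetaLeft Fo θl lam0 t) (interface Fo lam0 t) =
        deriv (interface Fo lam0) t / (Fo * Ste) ↔
      lam0 - Ste / √π * exp (-lam0 ^ 2) * (θr / erfc lam0 + θl / erf lam0) = 0 := by
  have hden : Ste * √(t * Fo) ≠ 0 := mul_ne_zero hSte (Real.sqrt_pos.2 (mul_pos ht hFo)).ne'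
  rw [← sub_eq_zero, stefan_jump_sub_interface_speed Fo Ste θl θr lam0 t hFo ht hSte,
    div_eq_zero_iff, neg_eq_zero, or_iff_left hden]

theorem stefan_condition_iff_general (Fo Ste θl θr lam0 : ℝ) (hFo : 0 < Fo) (hSte : 0 < Ste) :
    (∀ t : ℝ, 0 < t →
        deriv (fun y => thetaRight Fo θr lam0 t y) (interface Fo lam0 t) -
          deriv (fun y => thetaLeft Fo θl lam0 t y) (interface Fo lam0 t) =
        deriv (fun τ => interface Fo lam0 τ) t / (Fo * Ste)) ↔
      lam0 - (Ste / Real.sqrt Real.pi) * Real.exp (-lam0 ^ 2) *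
        (θr / erfc lam0 + θl / erf lam0) = 0 :=
  ⟨fun h => (stefan_condition_at_iff Fo Ste θl θr lam0 1 hFo one_pos hSte.ne').1 (h 1 one_pos),
    fun h t ht => (stefan_condition_at_iff Fo Ste θl θr lam0 t hFo ht hSte.ne').2 h⟩

/-- The Stefan condition at the interface holds for all `t > 0` if and only if `λ₀`
solves the scalar transcendental equation. -/
theorem stefan_condition_iff (Fo Ste θl θr lam0 : ℝ) (hFo : 0 < Fo) (hSte : 0 < Ste)
    (hlam0 : 0 < lam0) (herf : erf lam0 ≠ 0) (herfc : erfc lam0 ≠ 0) :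
    (∀ t : ℝ, 0 < t →
        deriv (fun y => thetaRight Fo θr lam0 t y) (interface Fo lam0 t) -
          deriv (fun y => thetaLeft Fo θl lam0 t y) (interface Fo lam0 t) =
        deriv (fun τ => interface Fo lam0 τ) t / (Fo * Ste)) ↔
      lam0 - (Ste / Real.sqrt Real.pi) * Real.exp (-lam0 ^ 2) *
        (θr / erfc lam0 + θl / erf lam0) = 0 :=
  stefan_condition_iff_general Fo Ste θl θr lam0 hFo hSte
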